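/- arXiv:2601.11226 — 5 statements merged into one kernel-verified Lean document; each statement's English description precedes it below -/
import Mathlib

section
/- Let {α(n)} be a sequence of positive real numbers that is log-concave for all n ≥ n₀ (i.e., α(n)² ≥ α(n-1)·α(n+1) for n ≥ n₀). If α(n₀-1)^(1/(n₀-1)) > α(n₀)^(1/n₀), then the sequence {α(n)^(1/n)} for n ≥ n₀-1 is strictly decreasing. -/
/-- Log-concavity from `n₀` on, together with the initial condition
`α(n₀-1)^(1/(n₀-1)) > α(n₀)^(1/n₀)`, implies that `{α(n)^(1/n)}` is
strictly decreasing for `n ≥ n₀ - 1`. -/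
theorem logconcave_initial_implies_root_decreasing (α : ℕ → ℝ) (hα : ∀ n, 0 < α n)
    (n₀ : ℕ) (hn₀ : 2 ≤ n₀)
    (hlc : ∀ n, n₀ ≤ n → α (n - 1) * α (n + 1) ≤ α n ^ 2)
    (hinit : α (n₀ - 1) ^ (((n₀ : ℝ) - 1)⁻¹) > α n₀ ^ ((n₀ : ℝ)⁻¹)) :
    ∀ n, n₀ - 1 ≤ n → α n ^ ((n : ℝ)⁻¹) > α (n + 1) ^ (((n : ℝ) + 1)⁻¹) := by
  set a : ℕ → ℝ := fun n => Real.log (α n) with ha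
  have key : ∀ n, n₀ - 1 ≤ n → ((n : ℝ) + 1) * a n > (n : ℝ) * a (n + 1) := by
    intro n hn
    induction n, hn using Nat.le_induction with
    | base =>
      have hcast : ((n₀ - 1 : ℕ) : ℝ) = (n₀ : ℝ) - 1 := by
        have : (1:ℕ) ≤ n₀ := by omega
        push_cast [this]; ring
      have h2 : (0:ℝ) < (n₀ : ℝ) - 1 := by
        have : (2:ℝ) ≤ (n₀:ℝ) := by exact_mod_cast hn₀
        linarith
      have h3 : (0:ℝ) < (n₀ : ℝ) := by linarith
      have hlog := Real.log_lt_log (Real.rpow_pos_of_pos (hα n₀) _) hinit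
      rw [Real.log_rpow (hα _), Real.log_rpow (hα _), inv_mul_eq_div, inv_mul_eq_div,
        div_lt_div_iff₀ h3 h2] at hlog
      have hm1 : n₀ - 1 + 1 = n₀ := by omega
      rw [hcast, hm1]
      -- goal : (n₀ - 1 + 1) * a (n₀-1) > (n₀-1) * a n₀
      have : a n₀ * ((n₀:ℝ) - 1) < a (n₀ - 1) * (n₀:ℝ) := hlog
      nlinarith
    | succ n hn ih =>
      have hl := hlc (n + 1) (by omega)
      simp only [Nat.add_sub_cancel] at hl
      have hlog := Real.log_le_log (mul_pos (hα n) (hα (n+2))) hl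
      rw [Real.log_mul (hα n).ne' (hα (n+2)).ne', Real.log_pow] at hlog
      have hlog' : a n + a (n + 2) ≤ 2 * a (n + 1) := by
        simpa [ha] using hlog
      have hn0 : (0:ℝ) ≤ (n:ℝ) := by positivity
      push_cast
      nlinarith [mul_le_mul_of_nonneg_left hlog' (by positivity : (0:ℝ) ≤ (n:ℝ) + 1)]
  intro n hn
  have hk := key n hn
  have hnpos : (0:ℝ) < (n:ℝ) := by
    have : 1 ≤ n := by omega
    exact_mod_cast this
  have hgoal : ((n:ℝ) + 1)⁻¹ * a (n + 1) < (n:ℝ)⁻¹ * a n := by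
    rw [inv_mul_eq_div, inv_mul_eq_div, div_lt_div_iff₀ (by linarith) hnpos]
    push_cast at hk ⊢
    nlinarith
  rw [gt_iff_lt, ← Real.log_lt_log_iff (Real.rpow_pos_of_pos (hα (n+1)) _)
      (Real.rpow_pos_of_pos (hα n) _), Real.log_rpow (hα _), Real.log_rpow (hα _)]
  exact_mod_cast hgoal
end

section
/- Let g be an arithmetic function with g(1) = 1 and positive values, and let P_n^g be the associated generalized D'Arcais polynomials. Then Δ_n^g(x) := (P_n^g(x))^(n+1) − (P_{n+1}^g(x))^n tends to +∞ as x → ∞; in particular, there exists x₀ such that Δ_n^g(x) > 0 for all x > x₀. -/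
open Polynomial Finset Filter Nat

lemma darcais_coeff_aux (g : ℕ → ℝ) (hg1 : g 1 = 1)
    (P : ℕ → Polynomial ℝ) (hP0 : P 0 = 1)
    (hP : ∀ n : ℕ, 1 ≤ n → (n : ℝ) • P n = X * ∑ k ∈ Icc 1 n, C (g k) * P (n - k)) :
    ∀ n : ℕ, (P n).natDegree ≤ n ∧ (P n).coeff n = 1 / (n ! : ℝ) := by
  intro n
  induction n using Nat.strong_induction_on with
  | _ n ih =>
    match n with
    | 0 => simp [hP0]
    | (m+1) =>
      have hrec := hP (m+1) (by omega)
      have hc : ∀ j, ((m+1 : ℕ) : ℝ) * (P (m+1)).coeff j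
          = (X * ∑ k ∈ Icc 1 (m+1), C (g k) * P (m+1-k)).coeff j := by
        intro j
        rw [← hrec, coeff_smul, smul_eq_mul]
      have coeffS : ∀ j, ((∑ k ∈ Icc 1 (m+1), C (g k) * P (m+1-k)).coeff j)
          = ∑ k ∈ Icc 1 (m+1), g k * (P (m+1-k)).coeff j := by
        intro j
        rw [finset_sum_coeff]
        simp [coeff_C_mul]
      have hm1 : ((m+1 : ℕ) : ℝ) ≠ 0 := by positivity
      constructor
      · rw [natDegree_le_iff_coeff_eq_zero]
        intro N hN
        obtain ⟨j, rfl⟩ : ∃ j, N = j + 1 := ⟨N - 1, by omega⟩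
        have h0 : (X * ∑ k ∈ Icc 1 (m+1), C (g k) * P (m+1-k)).coeff (j+1) = 0 := by
          rw [coeff_X_mul, coeffS]
          apply Finset.sum_eq_zero
          intro k hk
          simp only [Finset.mem_Icc] at hk
          have : (P (m+1-k)).coeff j = 0 := by
            apply coeff_eq_zero_of_natDegree_lt
            exact lt_of_le_of_lt (ih (m+1-k) (by omega)).1 (by omega)
          rw [this, mul_zero]
        have := hc (j+1)
        rw [h0] at this
        exact (mul_eq_zero.mp this).resolve_left hm1
      · have h1 : (X * ∑ k ∈ Icc 1 (m+1), C (g k) * P (m+1-k)).coeff (m+1)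
            = 1 / (m ! : ℝ) := by
          rw [coeff_X_mul, coeffS]
          have hsplit : Icc 1 (m+1) = insert 1 (Icc 2 (m+1)) := by
            ext x; simp [Finset.mem_Icc, Finset.mem_insert]; omega
          rw [hsplit, Finset.sum_insert (by simp [Finset.mem_Icc])]
          have hz : ∑ k ∈ Icc 2 (m+1), g k * (P (m+1-k)).coeff m = 0 := by
            apply Finset.sum_eq_zero
            intro k hk
            simp only [Finset.mem_Icc] at hk
            have : (P (m+1-k)).coeff m = 0 := by
              apply coeff_eq_zero_of_natDegree_lt
              exact lt_of_le_of_lt (ih (m+1-k) (by omega)).1 (by omega)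
            rw [this, mul_zero]
          rw [hz, add_zero]
          simp only [Nat.add_sub_cancel, hg1, one_mul]
          exact (ih m (by omega)).2
        have := hc (m+1)
        rw [h1] at this
        have hfm : ((m ! : ℕ) : ℝ) ≠ 0 := by positivity
        have hfm1 : (((m+1) ! : ℕ) : ℝ) = ((m+1 : ℕ) : ℝ) * (m ! : ℝ) := by
          rw [Nat.factorial_succ]; push_cast; ring
        rw [hfm1]
        field_simp at this ⊢
        linarith

/-- For the generalized D'Arcais polynomials `P_n^g`, the function
`Δ_n^g(x) = P_n^g(x)^(n+1) − P_{n+1}^g(x)^n` tends to `+∞` as `x → ∞`;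
in particular it is eventually positive. -/
theorem darcais_delta_tendsto_atTop (g : ℕ → ℝ) (hg1 : g 1 = 1)
    (hgpos : ∀ k, 1 ≤ k → 0 < g k)
    (P : ℕ → Polynomial ℝ) (hP0 : P 0 = 1)
    (hP : ∀ n : ℕ, 1 ≤ n → (n : ℝ) • P n = X * ∑ k ∈ Icc 1 n, C (g k) * P (n - k))
    (n : ℕ) (hn : 1 ≤ n) :
    Tendsto (fun x : ℝ => (P n).eval x ^ (n + 1) - (P (n + 1)).eval x ^ n) atTop atTop ∧
    ∃ x₀ : ℝ, ∀ x, x₀ < x → 0 < (P n).eval x ^ (n + 1) - (P (n + 1)).eval x ^ n := by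
  have aux := darcais_coeff_aux g hg1 P hP0 hP
  -- natDegree and leading coefficient of P n, P (n+1)
  have hfpos : ∀ m : ℕ, (0:ℝ) < (m ! : ℝ) := fun m => by positivity
  have hdeg : ∀ m : ℕ, (P m).natDegree = m := by
    intro m
    refine le_antisymm (aux m).1 (le_natDegree_of_ne_zero ?_)
    rw [(aux m).2]
    positivity
  have hlc : ∀ m : ℕ, (P m).leadingCoeff = 1 / (m ! : ℝ) := by
    intro m
    rw [leadingCoeff, hdeg m, (aux m).2]
  -- the difference polynomial
  set Q : Polynomial ℝ := P n ^ (n+1) - P (n+1) ^ n with hQ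
  set N : ℕ := n * (n + 1) with hN
  have hcoeffA : (P n ^ (n+1)).coeff N = (1 / (n ! : ℝ)) ^ (n+1) := by
    have := coeff_pow_mul_natDegree (P n) (n+1)
    rw [hdeg n, hlc n] at this
    rw [hN, mul_comm n (n+1)]
    exact this
  have hcoeffB : (P (n+1) ^ n).coeff N = (1 / (((n+1) ! : ℕ) : ℝ)) ^ n := by
    have := coeff_pow_mul_natDegree (P (n+1)) n
    rw [hdeg (n+1), hlc (n+1)] at this
    exact this
  -- the key numeric inequality
  have hineq : (1 / (((n+1) ! : ℕ) : ℝ)) ^ n < (1 / (n ! : ℝ)) ^ (n+1) := by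
    have hnat : (n ! : ℕ) < (n+1) ^ n := by
      calc n ! ≤ n ^ n := Nat.factorial_le_pow n
        _ < (n+1) ^ n := Nat.pow_lt_pow_left (by omega) (by omega)
    have hcast : ((n ! : ℕ) : ℝ) < ((n+1 : ℕ) : ℝ) ^ n := by
      have := (Nat.cast_lt (α := ℝ)).mpr hnat
      push_cast at this ⊢
      exact this
    have hfm1 : (((n+1) ! : ℕ) : ℝ) = ((n+1 : ℕ) : ℝ) * ((n ! : ℕ) : ℝ) := by
      rw [Nat.factorial_succ]; push_cast; ring
    rw [div_pow, div_pow, one_pow, one_pow, div_lt_div_iff₀ (by positivity) (by positivity),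
      one_mul, one_mul, hfm1, mul_pow, pow_succ]
    have h1 : (0:ℝ) < ((n ! : ℕ) : ℝ) ^ n := by positivity
    calc ((n ! : ℕ) : ℝ) ^ n * ((n ! : ℕ) : ℝ)
        < ((n ! : ℕ) : ℝ) ^ n * (((n+1 : ℕ) : ℝ) ^ n) := by
          exact mul_lt_mul_of_pos_left hcast h1
      _ = ((n+1 : ℕ) : ℝ) ^ n * ((n ! : ℕ) : ℝ) ^ n := by ring
  have hcoeffQ : Q.coeff N = (1 / (n ! : ℝ)) ^ (n+1) - (1 / (((n+1) ! : ℕ) : ℝ)) ^ n := by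
    rw [hQ, coeff_sub, hcoeffA, hcoeffB]
  have hcoeffQpos : 0 < Q.coeff N := by rw [hcoeffQ]; linarith
  have hQdegle : Q.natDegree ≤ N := by
    apply le_trans (natDegree_sub_le _ _)
    apply max_le
    · rw [natDegree_pow, hdeg n, hN, Nat.mul_comm]
    · rw [natDegree_pow, hdeg (n+1), hN]
  have hQdeg : Q.natDegree = N :=
    le_antisymm hQdegle (le_natDegree_of_ne_zero (ne_of_gt hcoeffQpos))
  have hQlc : 0 < Q.leadingCoeff := by rwa [leadingCoeff, hQdeg]
  have hQne : Q ≠ 0 := fun h => by simp [h] at hQlc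
  have hdegpos : 0 < Q.degree := by
    rw [← natDegree_pos_iff_degree_pos, hQdeg, hN]
    positivity
  have htend : Tendsto (fun x : ℝ => Q.eval x) atTop atTop :=
    Q.tendsto_atTop_of_leadingCoeff_nonneg hdegpos (le_of_lt hQlc)
  have heq : (fun x : ℝ => (P n).eval x ^ (n + 1) - (P (n + 1)).eval x ^ n)
      = fun x : ℝ => Q.eval x := by
    funext x
    simp [hQ]
  rw [heq]
  refine ⟨htend, ?_⟩
  obtain ⟨x₀, hx₀⟩ := eventually_atTop.mp (htend.eventually_ge_atTop 1)
  refine ⟨x₀, fun x hx => ?_⟩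
  have h := hx₀ x hx.le
  simp only [hQ, eval_sub, eval_pow] at h
  linarith
end

section
/- Let P_n(x) = (1/n!) ∏_{k=0}^{n-1} (x+k). Then for all real x > 1 and all n ≥ 1, (P_n(x))^(n+1) > (P_{n+1}(x))^n, and x = 1 is the largest real zero of (P_n(x))^(n+1) − (P_{n+1}(x))^n for n ≥ 1. -/
open Finset

private lemma prod_fact_cast (n : ℕ) :
    ∏ k ∈ range n, ((k : ℝ) + 1) = (n.factorial : ℝ) := by
  induction n with
  | zero => simp
  | succ n ih => rw [prod_range_succ, ih, Nat.factorial_succ]; push_cast; ring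

private lemma P_eq_prod (n : ℕ) (x : ℝ) :
    (1 / n.factorial : ℝ) * ∏ k ∈ range n, (x + k)
      = ∏ k ∈ range n, ((x + k) / (k + 1)) := by
  rw [prod_div_distrib, prod_fact_cast]
  have : (n.factorial : ℝ) ≠ 0 := Nat.cast_ne_zero.2 n.factorial_ne_zero
  field_simp

private lemma main_ineq (x : ℝ) (hx : 1 < x) (n : ℕ) (hn : 1 ≤ n) :
    (∏ k ∈ range (n+1), ((x + k) / (k + 1))) ^ n
      < (∏ k ∈ range n, ((x + k) / (k + 1))) ^ (n + 1) := by
  set a := ∏ k ∈ range n, ((x + k) / (k + 1)) with ha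
  set r := (x + n) / (n + 1) with hr
  have hpos : ∀ k ∈ range n, 0 < (x + k) / (k + 1) := by
    intro k _
    apply div_pos <;> positivity
  have hapos : 0 < a := prod_pos hpos
  have hrpos : 0 < r := by apply div_pos <;> positivity
  have hra : r ^ n < a := by
    have := Finset.prod_lt_prod_of_nonempty (f := fun _ : ℕ => r)
      (g := fun k : ℕ => (x + k) / (k + 1)) (s := range n)
      (fun _ _ => hrpos)
      (by
        intro k hk
        have hk' : (k : ℝ) < n := by exact_mod_cast mem_range.1 hk
        rw [hr, div_lt_div_iff₀ (by positivity) (by positivity)]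
        nlinarith [mul_pos (sub_pos.2 hx) (sub_pos.2 hk')])
      ⟨0, mem_range.2 hn⟩
    rwa [Finset.prod_const, card_range] at this
  have hstep : ∏ k ∈ range (n+1), ((x + k) / (k + 1)) = a * r := by
    rw [prod_range_succ]
  rw [hstep, mul_pow, pow_succ]
  have : r ^ n * a ^ n < a * a ^ n := by
    apply mul_lt_mul_of_pos_right hra (by positivity)
  nlinarith [this]

/-- For the normalized Pochhammer polynomials `P_n(x) = (1/n!)∏_{k=0}^{n-1}(x+k)`:
for all `x > 1` and `n ≥ 1` we have `P_n(x)^(n+1) > P_{n+1}(x)^n`, and `x = 1`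
is the largest real zero of `Δ_n(x) = P_n(x)^(n+1) − P_{n+1}(x)^n` for `n ≥ 1`. -/
theorem pochhammer_delta_largest_zero
    (P : ℕ → ℝ → ℝ)
    (hPdef : ∀ n x, P n x = (1 / n.factorial : ℝ) * ∏ k ∈ range n, (x + k)) :
    (∀ x : ℝ, 1 < x → ∀ n, 1 ≤ n → P n x ^ (n + 1) > P (n + 1) x ^ n) ∧
    (∀ n, 1 ≤ n → P n 1 ^ (n + 1) - P (n + 1) 1 ^ n = 0 ∧
      ∀ x : ℝ, P n x ^ (n + 1) - P (n + 1) x ^ n = 0 → x ≤ 1) := by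
  have key : ∀ x : ℝ, 1 < x → ∀ n, 1 ≤ n → P n x ^ (n + 1) > P (n + 1) x ^ n := by
    intro x hx n hn
    rw [hPdef, hPdef, P_eq_prod, P_eq_prod]
    exact main_ineq x hx n hn
  refine ⟨key, fun n hn => ⟨?_, fun x hx => ?_⟩⟩
  · have h1 : ∀ m : ℕ, P m 1 = 1 := by
      intro m
      rw [hPdef, P_eq_prod]
      apply Finset.prod_eq_one
      intro k _
      rw [div_eq_one_iff_eq (by positivity)]
      ring
    rw [h1, h1]
    simp
  · by_contra hle
    push_neg at hle
    have := key x hle n hn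
    linarith
end

section
/- Let g(2), g(3) be positive reals and Q(x) := 7x⁴ + 15g(2)x³ + (9g(2)² − 8g(3))x² + (9g(2)³ − 24g(3)g(2))x − 8g(3)². Then Q(x) ≥ 0 for all x ≥ g(2) if and only if g(3) ≤ g(2)². -/
/-- For positive reals `a = g(2)`, `b = g(3)`, the quartic
`Q(x) = 7x⁴ + 15ax³ + (9a² − 8b)x² + (9a³ − 24ab)x − 8b²` is nonnegative on
`[a, ∞)` if and only if `b ≤ a²`. -/
theorem quartic_nonneg_iff (a b : ℝ) (ha : 0 < a) (hb : 0 < b) :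
    (∀ x : ℝ, a ≤ x →
      0 ≤ 7 * x ^ 4 + 15 * a * x ^ 3 + (9 * a ^ 2 - 8 * b) * x ^ 2 +
        (9 * a ^ 3 - 24 * a * b) * x - 8 * b ^ 2) ↔ b ≤ a ^ 2 := by
  constructor
  · intro h
    have := h a le_rfl
    nlinarith [sq_nonneg a, sq_nonneg b, mul_pos ha hb, sq_nonneg (a^2 + b)]
  · intro hba x hx
    have hx0 : 0 < x := lt_of_lt_of_le ha hx
    nlinarith [mul_nonneg (sub_nonneg.2 hx) (by positivity : (0:ℝ) ≤ 7*x^3 + 22*a*x^2 + 23*a^2*x + 8*a^3),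
      mul_nonneg (sub_nonneg.2 hba) (sq_nonneg x),
      mul_nonneg (mul_nonneg (sub_nonneg.2 hba) ha.le) hx0.le,
      mul_nonneg (sub_nonneg.2 hba) (by positivity : (0:ℝ) ≤ a^2 + b)]
end

section
/- Let P_n(x) be defined by P_0(x) = 1 and P_n(x) = (x/n) Σ_{k=1}^n k·P_{n-k}(x). Then P_n(x) = (x/n)·L_{n-1}^{(1)}(−x) for n ≥ 1, where L_m^{(1)}(x) = Σ_{k=0}^m binom(m+1, m−k) (−x)^k / k! is the 1-associated Laguerre polynomial. -/
open Polynomial Finset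

private lemma sum_Icc_one_eq_range {M : Type*} [AddCommMonoid M] (f : ℕ → M) (n : ℕ) :
    ∑ k ∈ Icc 1 n, f k = ∑ j ∈ range n, f (j + 1) := by
  induction n with
  | zero => simp
  | succ n ih => rw [Finset.sum_Icc_succ_top (by omega), ih, Finset.sum_range_succ]

private lemma hockey (t n : ℕ) :
    ∑ i ∈ range (n + 1), (i + t).choose t = (n + t + 1).choose (t + 1) := by
  induction n with
  | zero => simp
  | succ n ih =>
    rw [Finset.sum_range_succ, ih]
    have e1 : (n + 1 + t).choose t = (n + t + 1).choose t := by congr 1; omega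
    have e2 : (n + 1 + t + 1).choose (t + 1)
        = (n + t + 1).choose t + (n + t + 1).choose (t + 1) := by
      have : n + 1 + t + 1 = (n + t + 1) + 1 := by omega
      rw [this, Nat.choose_succ_succ]
    omega

private lemma keyB (t n : ℕ) :
    ∑ j ∈ range n, (j + 1) * (n - 1 - j + t).choose t = (n + t + 1).choose (t + 2) := by
  induction n with
  | zero => simp [Nat.choose_eq_zero_of_lt]
  | succ n ih =>
    rw [Finset.sum_range_succ']
    have h1 : ∀ j ∈ range n, (j + 1 + 1) * (n + 1 - 1 - (j + 1) + t).choose t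
        = (j + 1) * (n - 1 - j + t).choose t + (n - 1 - j + t).choose t := by
      intro j hj
      have : n + 1 - 1 - (j + 1) = n - 1 - j := by omega
      rw [this]; ring
    rw [Finset.sum_congr rfl h1, Finset.sum_add_distrib, ih]
    have h2 : ∑ j ∈ range n, (n - 1 - j + t).choose t = ∑ j ∈ range n, (j + t).choose t :=
      Finset.sum_range_reflect (fun j => (j + t).choose t) n
    have h3 : (0 + 1) * (n + 1 - 1 - 0 + t).choose t = (n + t).choose t := by
      simp
    rw [h2, h3]
    have h4 : ∑ j ∈ range n, (j + t).choose t + (n + t).choose t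
        = (n + t + 1).choose (t + 1) := by
      rw [← Finset.sum_range_succ, hockey]
    have e2 : (n + 1 + t + 1).choose (t + 2)
        = (n + t + 1).choose (t + 1) + (n + t + 1).choose (t + 2) := by
      have : n + 1 + t + 1 = (n + t + 1) + 1 := by omega
      rw [this, Nat.choose_succ_succ]
    omega

/-- key Nat identity in the Icc form used below -/
private lemma keyB' (m t : ℕ) (ht : t < m) :
    ∑ k ∈ Icc 1 (m - t), k * (m - k).choose t = (m + 1).choose (t + 2) := by
  rw [sum_Icc_one_eq_range]
  have h1 : ∀ j ∈ range (m - t), (j + 1) * (m - (j + 1)).choose t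
      = (j + 1) * (m - t - 1 - j + t).choose t := by
    intro j hj
    simp only [Finset.mem_range] at hj
    have : m - (j + 1) = m - t - 1 - j + t := by omega
    rw [this]
  rw [Finset.sum_congr rfl h1, keyB]
  congr 1
  omega

noncomputable def Saux (m : ℕ) : Polynomial ℚ :=
  ∑ t ∈ range m, C (((m - 1).choose t : ℚ) / (t + 1).factorial) * X ^ (t + 1)

private lemma coeff_eq (m k : ℕ) (hk : k < m) :
    ((m : ℚ))⁻¹ * ((m.choose (m - 1 - k) : ℚ) / k.factorial)
      = ((m - 1).choose k : ℚ) / (k + 1).factorial := by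
  have hsymm : m.choose (m - 1 - k) = m.choose (k + 1) := by
    have h := Nat.choose_symm (n := m) (k := k + 1) (by omega)
    have : m - (k + 1) = m - 1 - k := by omega
    rw [this] at h
    exact h
  have hmul : m * (m - 1).choose k = m.choose (k + 1) * (k + 1) := by
    have h := Nat.add_one_mul_choose_eq (m - 1) k
    have h1 : m - 1 + 1 = m := by omega
    rw [h1] at h
    exact h
  rw [hsymm]
  have hc : ((m.choose (k + 1) : ℚ)) * ((k : ℚ) + 1) = (m : ℚ) * ((m - 1).choose k : ℚ) := by
    exact_mod_cast hmul.symm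
  have hm0 : (m : ℚ) ≠ 0 := by exact_mod_cast (by omega : m ≠ 0)
  have hf : ((k.factorial : ℚ)) ≠ 0 := by exact_mod_cast k.factorial_ne_zero
  have hf1 : (((k + 1).factorial : ℚ)) ≠ 0 := by exact_mod_cast (k + 1).factorial_ne_zero
  field_simp
  rw [Nat.factorial_succ]
  push_cast
  nlinarith [hc, hf, hm0]

private lemma Lcomp (m : ℕ) (hm : 1 ≤ m) :
    C ((m : ℚ))⁻¹ * X *
      ((∑ k ∈ range m, C ((m.choose (m - 1 - k) : ℚ) / k.factorial) * (-X) ^ k).comp (-X))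
      = Saux m := by
  rw [Polynomial.sum_comp]
  have hcomp : ∀ k, ((C ((m.choose (m - 1 - k) : ℚ) / k.factorial) * (-X) ^ k).comp (-X) :
      Polynomial ℚ) = C ((m.choose (m - 1 - k) : ℚ) / k.factorial) * X ^ k := by
    intro k
    simp [mul_comp, pow_comp, neg_comp, X_comp]
  simp only [hcomp]
  rw [Finset.mul_sum, Saux]
  refine Finset.sum_congr rfl fun k hk => ?_
  simp only [Finset.mem_range] at hk
  rw [← coeff_eq m k hk, C_mul]
  ring

private lemma coeff_eq2 (m t : ℕ) :
    (((m + 1).choose (t + 2) : ℚ)) / (t + 1).factorial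
      = (((m + 1 : ℕ) : ℚ)) * ((m.choose (t + 1) : ℚ)) / (t + 2).factorial := by
  have hmul : (m + 1) * m.choose (t + 1) = (m + 1).choose (t + 2) * (t + 2) :=
    Nat.add_one_mul_choose_eq m (t + 1)
  have hc : (((m : ℚ) + 1)) * ((m.choose (t + 1) : ℚ))
      = (((m + 1).choose (t + 2) : ℚ)) * ((t : ℚ) + 2) := by exact_mod_cast hmul
  have hf : (((t + 1).factorial : ℚ)) ≠ 0 := by exact_mod_cast (t + 1).factorial_ne_zero
  have hf2 : (((t + 2).factorial : ℚ)) ≠ 0 := by exact_mod_cast (t + 2).factorial_ne_zero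
  rw [div_eq_div_iff hf hf2]
  have hfe : ((t + 2).factorial : ℚ) = ((t : ℚ) + 2) * ((t + 1).factorial : ℚ) := by
    rw [show t + 2 = (t + 1) + 1 from rfl, Nat.factorial_succ]
    push_cast; ring
  rw [hfe]
  push_cast
  nlinarith [hc]

private lemma rec_S (n : ℕ) (hn : 1 ≤ n) :
    X * (∑ k ∈ Icc 1 n, C ((k : ℕ) : ℚ) * (if n - k = 0 then 1 else Saux (n - k)))
      = (n : ℚ) • Saux n := by
  obtain ⟨m, rfl⟩ : ∃ m, n = m + 1 := ⟨n - 1, by omega⟩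
  rw [Finset.sum_Icc_succ_top (by omega)]
  rw [if_pos (Nat.sub_self (m + 1)), mul_one]
  have hsplit : ∀ k ∈ Icc 1 m,
      C ((k : ℕ) : ℚ) * (if m + 1 - k = 0 then (1 : Polynomial ℚ) else Saux (m + 1 - k))
      = ∑ t ∈ range (m + 1 - k), C ((k : ℚ) * ((m - k).choose t : ℚ) / (t + 1).factorial)
          * X ^ (t + 1) := by
    intro k hk
    simp only [Finset.mem_Icc] at hk
    have h0 : m + 1 - k ≠ 0 := by omega
    rw [if_neg h0, Saux, Finset.mul_sum]
    have : m + 1 - k - 1 = m - k := by omega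
    rw [this]
    refine Finset.sum_congr rfl fun t ht => ?_
    rw [← mul_assoc, ← C_mul, mul_div_assoc]
  rw [Finset.sum_congr rfl hsplit]
  -- swap order of summation
  rw [Finset.sum_comm' (t' := range m) (s' := fun t => Icc 1 (m - t))
    (f := fun k t => C ((k : ℚ) * ((m - k).choose t : ℚ) / (t + 1).factorial) * X ^ (t + 1))
    (fun k t => by simp only [Finset.mem_Icc, Finset.mem_range]; omega)]
  have hinner : ∀ t ∈ range m,
      ∑ k ∈ Icc 1 (m - t), C ((k : ℚ) * ((m - k).choose t : ℚ) / (t + 1).factorial) * X ^ (t + 1)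
      = C (((m + 1).choose (t + 2) : ℚ) / (t + 1).factorial) * X ^ (t + 1) := by
    intro t ht
    simp only [Finset.mem_range] at ht
    rw [← Finset.sum_mul, ← map_sum]
    congr 2
    rw [← Finset.sum_div]
    congr 1
    rw [← keyB' (m := m) (t := t) ht]
    push_cast
    rfl
  rw [Finset.sum_congr rfl hinner]
  -- expand the RHS
  rw [Saux, Nat.add_sub_cancel, Finset.smul_sum, Finset.sum_range_succ']
  have hterm : ∀ t ∈ range m, ((m + 1 : ℕ) : ℚ) •
      (C ((m.choose (t + 1) : ℚ) / (t + 1 + 1).factorial) * X ^ (t + 1 + 1))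
      = C (((m + 1).choose (t + 2) : ℚ) / (t + 1).factorial) * X ^ (t + 2) := by
    intro t ht
    rw [Polynomial.smul_eq_C_mul, ← mul_assoc, ← C_mul, ← mul_div_assoc,
      show t + 1 + 1 = t + 2 from rfl, ← coeff_eq2]
  rw [Finset.sum_congr rfl hterm]
  have h0 : ((m + 1 : ℕ) : ℚ) • (C ((m.choose 0 : ℚ) / (0 + 1).factorial) * X ^ (0 + 1))
      = C ((m + 1 : ℕ) : ℚ) * X := by
    simp [Polynomial.smul_eq_C_mul]
  rw [h0, mul_add, Finset.mul_sum]
  congr 1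
  · refine Finset.sum_congr rfl fun t ht => ?_
    ring
  · ring

/-- For `g(n) = n`, the generalized D'Arcais polynomials satisfy
`P_n(x) = (x/n)·L_{n-1}^{(1)}(−x)` where
`L_m^{(1)}(x) = ∑_{k=0}^m (m+1 choose m−k)(−x)^k/k!` is the 1-associated
Laguerre polynomial. -/
theorem darcais_psi1_laguerre (P : ℕ → Polynomial ℚ) (hP0 : P 0 = 1)
    (hP : ∀ n : ℕ, 1 ≤ n → (n : ℚ) • P n = X * ∑ k ∈ Icc 1 n, C (k : ℚ) * P (n - k))
    (L : ℕ → Polynomial ℚ)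
    (hL : ∀ m, L m = ∑ k ∈ range (m + 1),
      C (((m + 1).choose (m - k) : ℚ) / k.factorial) * (-X) ^ k) :
    ∀ n, 1 ≤ n → P n = C ((n : ℚ)⁻¹) * X * (L (n - 1)).comp (-X) := by
  have hQ : ∀ m : ℕ, 1 ≤ m → C ((m : ℚ)⁻¹) * X * (L (m - 1)).comp (-X) = Saux m := by
    intro m hm
    rw [hL (m - 1)]
    have h1 : m - 1 + 1 = m := by omega
    rw [h1]
    exact Lcomp m hm
  intro n
  induction n using Nat.strong_induction_on with
  | _ n ih =>
    intro hn
    have h := hP n hn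
    have hsum : ∀ k ∈ Icc 1 n, C ((k : ℕ) : ℚ) * P (n - k)
        = C ((k : ℕ) : ℚ) * (if n - k = 0 then 1 else Saux (n - k)) := by
      intro k hk
      simp only [Finset.mem_Icc] at hk
      by_cases h0 : n - k = 0
      · rw [h0, hP0, if_pos rfl]
      · rw [if_neg h0]
        have hlt : n - k < n := by omega
        have h1 : 1 ≤ n - k := by omega
        rw [ih (n - k) hlt h1, hQ (n - k) h1]
    rw [Finset.sum_congr rfl hsum, rec_S n hn] at h
    have hinj : Function.Injective (fun p : Polynomial ℚ => (n : ℚ) • p) :=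
      smul_right_injective _ (by exact_mod_cast (by omega : n ≠ 0))
    have : P n = Saux n := hinj h
    rw [this, hQ n hn]
end
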